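/- arXiv:2601.18590 — 3 statements merged into one kernel-verified Lean document; each statement's English description precedes it below -/
import Mathlib

section
/- Let q be a prime power and h ≥ 1 an integer. Let u = (a_1,…,a_h | b_1,…,b_h) ∈ 𝔽_q^{2h} be a vector with (a_i, b_i) ≠ (0,0) for every i ∈ {1,…,h}. Then the number of vectors v = (x_1,…,x_h | y_1,…,y_h) ∈ 𝔽_q^{2h} satisfying (x_i, y_i) ≠ (0,0) for every i ∈ {1,…,h} and ∑_{i=1}^{h} (a_i y_i − b_i x_i) = 0 equals ∑_{j=0}^{h−1} (−1)^j C(h,j) q^{2h−1−2j} + (−1)^h. -/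
open Finset
open scoped Classical

/-- The symplectic inner product on `F^{2h}`, for vectors written as `Fin h → F × F`:
`⟨(a|b),(x|y)⟩_S = ∑_i (a_i y_i - b_i x_i)`. -/
def sympInner {F : Type} [Field F] {h : ℕ} (u v : Fin h → F × F) : F :=
  ∑ i, ((u i).1 * (v i).2 - (u i).2 * (v i).1)

/-!
Inclusion–exclusion over the set `t` of coordinates on which `v` is forced to vanish. The
vectors vanishing on `t` form a space of dimension `2 (h - |t|)`, on which `⟨u, ·⟩_S` is a
nonzero functional as soon as `t` is proper, because `u` has full support; so exactly
`q^{2h - 1 - 2|t|}` of them are orthogonal to `u`. For `t` the full index set only `v = 0`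
remains, which gives the term `(-1)^h`.
-/

section Counting

variable {ι M : Type*} [Fintype ι] [DecidableEq ι] [Fintype M] [Zero M] [DecidableEq M]

theorem card_filter_forall_mem_eq_zero (t : Finset ι) :
    #{v : ι → M | ∀ i ∈ t, v i = 0} = Fintype.card M ^ (Fintype.card ι - #t) := by
  have hpi : ({v | ∀ i ∈ t, v i = 0} : Finset (ι → M)) =
      Fintype.piFinset fun i => if i ∈ t then {0} else univ := by
    ext v
    simp only [mem_filter, mem_univ, true_and, Fintype.mem_piFinset]
    refine forall_congr' fun i => ?_
    split_ifs <;> simp [*]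
  rw [hpi, Fintype.card_piFinset]
  simp only [apply_ite card, card_singleton, card_univ]
  rw [prod_ite]
  simp [filter_not, card_sdiff]

theorem card_filter_forall_ne_zero_and (P : (ι → M) → Prop) [DecidablePred P] :
    (#{v | (∀ i, v i ≠ 0) ∧ P v} : ℤ) =
      ∑ t ∈ univ.powerset, (-1) ^ #t * (#{v | (∀ i ∈ t, v i = 0) ∧ P v} : ℤ) := by
  let Z (i : ι) : Finset (ι → M) := {v | v i = 0}
  have hZ (t : Finset ι) : t.inf Z = ({v | ∀ i ∈ t, v i = 0} : Finset (ι → M)) := by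
    ext
    simp [Z, mem_inf]
  have hZc : univ.inf (fun i => (Z i)ᶜ) = ({v | ∀ i, v i ≠ 0} : Finset (ι → M)) := by
    ext
    simp [Z, mem_inf]
  calc (#{v | (∀ i, v i ≠ 0) ∧ P v} : ℤ)
      = ∑ v ∈ univ.inf (fun i => (Z i)ᶜ), if P v then 1 else 0 := by
        rw [sum_boole, hZc, filter_filter]
    _ = ∑ t ∈ univ.powerset, (-1 : ℤ) ^ #t • ∑ v ∈ t.inf Z, if P v then 1 else 0 :=
        inclusion_exclusion_sum_inf_compl _ _ _
    _ = _ := by simp only [hZ, sum_boole, filter_filter, smul_eq_mul]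

end Counting

theorem card_filter_mem_and_eq_zero_mul_card {F V : Type*} [Field F] [Fintype F] [DecidableEq F]
    [AddCommGroup V] [Module F V] [Fintype V] (W : Submodule F V) [DecidablePred (· ∈ W)]
    (φ : V →ₗ[F] F) (hφ : ∃ w ∈ W, φ w ≠ 0) :
    #{v | v ∈ W ∧ φ v = 0} * Fintype.card F = #{v | v ∈ W} := by
  set ψ := φ.domRestrict W
  have hψ : Function.Surjective ψ := by
    refine LinearMap.surjective_of_ne_zero fun hψ0 => ?_
    obtain ⟨w, hw, hφw⟩ := hφ
    exact hφw (LinearMap.congr_fun hψ0 ⟨w, hw⟩)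
  have hcard := Submodule.card_eq_card_quotient_mul_card (LinearMap.ker ψ)
  rw [Nat.card_congr (ψ.quotKerEquivOfSurjective hψ).toEquiv] at hcard
  have hker : Nat.card (LinearMap.ker ψ) = #{v | v ∈ W ∧ φ v = 0} := by
    rw [← Fintype.card_subtype, ← Nat.card_eq_fintype_card]
    exact Nat.card_congr (Equiv.subtypeSubtypeEquivSubtypeInter (· ∈ W) (φ · = 0))
  rw [← hker, ← Nat.card_eq_fintype_card, ← hcard, Nat.card_eq_fintype_card,
    Fintype.card_subtype]

section Symplectic

variable {F : Type} [Field F] {h : ℕ}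

def sympInnerₗ (u : Fin h → F × F) : (Fin h → F × F) →ₗ[F] F where
  toFun := sympInner u
  map_add' v w := by
    simp only [sympInner, ← sum_add_distrib]
    exact sum_congr rfl fun i _ => by simp only [Pi.add_apply, Prod.fst_add, Prod.snd_add]; ring
  map_smul' c v := by
    simp only [sympInner, RingHom.id_apply, smul_eq_mul, mul_sum]
    exact sum_congr rfl fun i _ => by
      simp only [Pi.smul_apply, Prod.smul_fst, Prod.smul_snd, smul_eq_mul]; ring

theorem sympInnerₗ_apply (u v : Fin h → F × F) : sympInnerₗ u v = sympInner u v := rfl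

theorem sympInner_single (u : Fin h → F × F) (i : Fin h) (p : F × F) :
    sympInner u (Pi.single i p) = (u i).1 * p.2 - (u i).2 * p.1 := by
  rw [sympInner, Fintype.sum_eq_single i fun j hj => by simp [Pi.single_eq_of_ne hj]]
  simp

theorem exists_mul_snd_sub_mul_fst_ne_zero {a : F × F} (ha : a ≠ 0) :
    ∃ p : F × F, a.1 * p.2 - a.2 * p.1 ≠ 0 := by
  by_contra! H
  exact ha (Prod.ext (by simpa using H (0, 1)) (by simpa using H (-1, 0)))

variable [Fintype F] [DecidableEq F]

theorem card_vanishing_sympOrth_mul_card {u : Fin h → F × F} (hu : ∀ i, u i ≠ 0)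
    {t : Finset (Fin h)} (ht : t ≠ univ) :
    #{v | (∀ i ∈ t, v i = 0) ∧ sympInner u v = 0} * Fintype.card F =
      Fintype.card F ^ (2 * (h - #t)) := by
  set W : Submodule F (Fin h → F × F) := Submodule.pi (t : Set (Fin h)) fun _ => ⊥
  have hW (v : Fin h → F × F) : v ∈ W ↔ ∀ i ∈ t, v i = 0 := by
    simp [W, Submodule.mem_pi]
  obtain ⟨i, hi⟩ : ∃ i, i ∉ t := by
    by_contra! H
    exact ht (eq_univ_of_forall H)
  obtain ⟨p, hp⟩ := exists_mul_snd_sub_mul_fst_ne_zero (hu i)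
  have hker := card_filter_mem_and_eq_zero_mul_card W (sympInnerₗ u)
    ⟨Pi.single i p, (hW _).mpr fun j hj => Pi.single_eq_of_ne (by rintro rfl; exact hi hj) _,
      by rwa [sympInnerₗ_apply, sympInner_single]⟩
  rw [filter_congr fun v _ => and_congr_left' (hW v), filter_congr fun v _ => hW v] at hker
  refine hker.trans ?_
  convert card_filter_forall_mem_eq_zero (M := F × F) t using 1
  · congr! -- the two filters differ only in their decidability instances
  · rw [Fintype.card_prod, Fintype.card_fin, ← sq, ← pow_mul]

theorem card_vanishing_sympOrth {u : Fin h → F × F} (hu : ∀ i, u i ≠ 0)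
    (t : Finset (Fin h)) :
    #{v | (∀ i ∈ t, v i = 0) ∧ sympInner u v = 0} =
      if #t = h then 1 else Fintype.card F ^ (2 * h - 1 - 2 * #t) := by
  split_ifs with ht
  · obtain rfl : t = univ := eq_univ_of_card t (by simpa using ht)
    rw [card_eq_one]
    refine ⟨0, eq_singleton_iff_unique_mem.mpr ⟨?_, fun v hv => ?_⟩⟩
    · exact mem_filter.mpr ⟨mem_univ _, fun _ _ => rfl, (sympInnerₗ u).map_zero⟩
    · funext i
      exact (mem_filter.mp hv).2.1 i (mem_univ i)
  · have hlt : #t < h := lt_of_le_of_ne (by simpa using card_le_univ t) ht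
    have hmul := card_vanishing_sympOrth_mul_card hu (t := t) (by rintro rfl; simp at hlt)
    rw [show 2 * (h - #t) = (2 * h - 1 - 2 * #t) + 1 by omega, pow_succ] at hmul
    exact Nat.eq_of_mul_eq_mul_right Fintype.card_pos hmul

end Symplectic

theorem symp_full_support_orth_count_general
    (q : ℕ) (F : Type) [Field F] [Fintype F] [DecidableEq F] (hF : Fintype.card F = q)
    (h : ℕ) (u : Fin h → F × F) (hu : ∀ i, u i ≠ 0) :
    (((Finset.univ : Finset (Fin h → F × F)).filter fun v =>
        (∀ i, v i ≠ 0) ∧ sympInner u v = 0).card : ℤ) =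
      (∑ j ∈ Finset.range h, (-1) ^ j * (h.choose j : ℤ) * (q : ℤ) ^ (2 * h - 1 - 2 * j)) +
        (-1) ^ h := by
  subst hF
  let N (j : ℕ) : ℤ :=
    (-1) ^ j * ((if j = h then 1 else Fintype.card F ^ (2 * h - 1 - 2 * j) : ℕ) : ℤ)
  calc (#{v | (∀ i, v i ≠ 0) ∧ sympInner u v = 0} : ℤ)
      = ∑ t ∈ univ.powerset,
          (-1) ^ #t * (#{v | (∀ i ∈ t, v i = 0) ∧ sympInner u v = 0} : ℤ) := by
        convert card_filter_forall_ne_zero_and (sympInner u · = 0)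
    _ = ∑ t ∈ (univ : Finset (Fin h)).powerset, N #t := by
        simp only [card_vanishing_sympOrth hu, N]
    _ = ∑ j ∈ range (h + 1), h.choose j • N j := by
        rw [sum_powerset_apply_card N, card_univ, Fintype.card_fin]
    _ = _ := by
        rw [sum_range_succ]
        congr 1
        · refine sum_congr rfl fun j hj => ?_
          simp only [N, if_neg (mem_range.mp hj).ne, nsmul_eq_mul]
          push_cast
          ring
        · simp [N]

/-- Let `q` be a prime power (realized as the cardinality of a finite field
`F`) and `h ≥ 1`. If `u ∈ F^{2h}` has all of its `h` symplectic coordinate pairs nonzero, then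
the number of `v ∈ F^{2h}` with all symplectic coordinate pairs nonzero satisfying
`⟨u,v⟩_S = 0` equals `∑_{j=0}^{h-1} (-1)^j C(h,j) q^{2h-1-2j} + (-1)^h`. -/
theorem symp_full_support_orth_count
    (q : ℕ) (F : Type) [Field F] [Fintype F] [DecidableEq F] (hF : Fintype.card F = q)
    (h : ℕ) (hh : 1 ≤ h) (u : Fin h → F × F) (hu : ∀ i, u i ≠ 0) :
    (((Finset.univ : Finset (Fin h → F × F)).filter fun v =>
        (∀ i, v i ≠ 0) ∧ sympInner u v = 0).card : ℤ) =
      (∑ j ∈ Finset.range h, (-1) ^ j * (h.choose j : ℤ) * (q : ℤ) ^ (2 * h - 1 - 2 * j)) +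
        (-1) ^ h :=
  symp_full_support_orth_count_general q F hF h u hu
end

section
/- For every odd positive integer t and every real number b with 0 < b ≤ (t+1)/e², it holds that ∑_{i=0}^{t} (−b)^i / i! ≥ e^{−b} − b^{t+1}/(t+1)!, and moreover e^{−b} − b^{t+1}/(t+1)! > 0; in particular ∑_{i=0}^{t} (−b)^i / i! > 0. -/
/-!
For `x ≥ 0` the remainder `∑_{i ≤ n} (-x)^i/i! - e^{-x}` has the sign of `(-1)^n`: it vanishes at
`0` and its derivative is minus the remainder of order `n - 1`, so induction on `n` and
monotonicity give the first inequality for the even `n = t + 1`. For positivity of the lower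
bound, `n^n/n! ≤ e^n` gives `b^n/n! ≤ (n/e²)^n/n! ≤ e^{-n} < e^{-b}`.
-/

open Finset Real
open scoped Nat

lemma hasDerivAt_sum_range_pow_div_factorial (n : ℕ) (x : ℝ) :
    HasDerivAt (fun y : ℝ => ∑ i ∈ range (n + 1), y ^ i / (i ! : ℝ))
      (∑ i ∈ range n, x ^ i / (i ! : ℝ)) x := by
  induction n with
  | zero => simpa using hasDerivAt_const x (1 : ℝ)
  | succ n ih =>
    have hlast : HasDerivAt (fun y : ℝ => y ^ (n + 1) / ((n + 1)! : ℝ)) (x ^ n / n !) x := by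
      refine ((hasDerivAt_pow (n + 1) x).div_const _).congr_deriv ?_
      rw [Nat.factorial_succ, Nat.cast_mul, Nat.add_sub_cancel, mul_div_mul_left]
      positivity
    rw [sum_range_succ _ n]
    simp only [sum_range_succ _ (n + 1)]
    exact ih.fun_add hlast

lemma neg_one_pow_mul_sum_range_sub_exp_neg_nonneg (n : ℕ) {x : ℝ} (hx : 0 ≤ x) :
    0 ≤ (-1) ^ n * (∑ i ∈ range (n + 1), (-x) ^ i / (i ! : ℝ) - exp (-x)) := by
  induction n generalizing x with
  | zero => simpa using exp_le_one_iff.2 (neg_nonpos.2 hx)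
  | succ n ih =>
    set g : ℝ → ℝ :=
      fun y => (-1) ^ (n + 1) * (∑ i ∈ range (n + 2), (-y) ^ i / (i ! : ℝ) - exp (-y))
    have hg : ∀ y, HasDerivAt g
        ((-1) ^ n * (∑ i ∈ range (n + 1), (-y) ^ i / (i ! : ℝ) - exp (-y))) y := by
      intro y
      have hsum := (hasDerivAt_sum_range_pow_div_factorial (n + 1) (-y)).comp y (hasDerivAt_neg y)
      have hexp := (hasDerivAt_exp (-y)).comp y (hasDerivAt_neg y)
      refine ((hsum.sub hexp).const_mul ((-1 : ℝ) ^ (n + 1))).congr_deriv ?_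
      ring
    have hmono : MonotoneOn g (Set.Ici 0) :=
      monotoneOn_of_hasDerivWithinAt_nonneg (convex_Ici 0)
        (fun y _ => (hg y).continuousAt.continuousWithinAt)
        (fun y _ => (hg y).hasDerivWithinAt)
        (fun y hy => ih (interior_subset hy))
    have hg0 : g 0 = 0 := by
      simp [g, sum_range_succ']
    simpa [hg0] using hmono Set.self_mem_Ici hx hx

lemma pow_div_factorial_lt_exp_neg {n : ℕ} (hn : 0 < n) {x : ℝ} (hx0 : 0 ≤ x)
    (hx : x ≤ n / exp 1 ^ 2) : x ^ n / n ! < exp (-x) := by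
  have hxn : x < n := hx.trans_lt <| div_lt_self (by exact_mod_cast hn) <|
    one_lt_pow₀ (one_lt_exp_iff.2 one_pos) two_ne_zero
  calc x ^ n / n ! ≤ (n / exp 1 ^ 2) ^ n / n ! := by gcongr
    _ = n ^ n / n ! * exp (-(2 * n)) := by
      rw [div_pow, ← pow_mul, ← exp_nat_mul, exp_neg]
      push_cast
      ring_nf
    _ ≤ exp n * exp (-(2 * n)) := by gcongr; exact pow_div_factorial_le_exp _ n.cast_nonneg n
    _ = exp (-n) := by rw [← exp_add]; ring_nf
    _ < exp (-x) := exp_lt_exp.2 (neg_lt_neg hxn)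

lemma exp_neg_sub_pow_div_factorial_le_sum_range {t : ℕ} (ht : Odd t) {x : ℝ} (hx : 0 ≤ x) :
    exp (-x) - x ^ (t + 1) / (t + 1)! ≤ ∑ i ∈ range (t + 1), (-x) ^ i / (i ! : ℝ) := by
  have h := neg_one_pow_mul_sum_range_sub_exp_neg_nonneg (t + 1) hx
  rw [ht.add_one.neg_one_pow, one_mul, sum_range_succ, ht.add_one.neg_pow] at h
  linarith

/-- For every odd positive integer `t` and every real `b` with
`0 < b ≤ (t+1)/e²`, one has `∑_{i=0}^{t} (-b)^i/i! ≥ e^{-b} - b^{t+1}/(t+1)!`, and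
`e^{-b} - b^{t+1}/(t+1)! > 0`; in particular `∑_{i=0}^{t} (-b)^i/i! > 0`. -/
theorem truncated_exp_alternating_pos
    (t : ℕ) (ht : Odd t) (b : ℝ) (hb0 : 0 < b)
    (hb : b ≤ ((t : ℝ) + 1) / Real.exp 1 ^ 2) :
    Real.exp (-b) - b ^ (t + 1) / (Nat.factorial (t + 1) : ℝ) ≤
        ∑ i ∈ Finset.range (t + 1), (-b) ^ i / (Nat.factorial i : ℝ) ∧
      0 < Real.exp (-b) - b ^ (t + 1) / (Nat.factorial (t + 1) : ℝ) ∧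
      0 < ∑ i ∈ Finset.range (t + 1), (-b) ^ i / (Nat.factorial i : ℝ) := by
  have hle := exp_neg_sub_pow_div_factorial_le_sum_range ht hb0.le
  have hpos : 0 < exp (-b) - b ^ (t + 1) / (t + 1)! :=
    sub_pos.2 <| pow_div_factorial_lt_exp_neg t.succ_pos hb0.le <| by exact_mod_cast hb
  exact ⟨hle, hpos, hpos.trans_le hle⟩
end

section
/- Let q be a prime power and let δ ∈ (0, 1 − 1/q²) be a constant. Then there exists a constant a_δ > 0 such that for all sufficiently large n the following holds with d − 1 = ⌊δn⌋ and ℓ = ⌊√n⌋: for every subset T ⊆ {1,…,n} with |T| ≥ (2δ/3)n, if u_1, …, u_ℓ are independent random vectors each distributed uniformly in B_q^S(2n, d−1), then the probability that the restricted vectors u_1|_T, …, u_ℓ|_T are linearly dependent over 𝔽_q is at most q^{−a_δ n}, where for u = (a_1,…,a_n | b_1,…,b_n) the restriction u|_T denotes the vector ((a_i)_{i∈T} | (b_i)_{i∈T}) ∈ 𝔽_q^{2|T|}. -/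
open Finset
open scoped Classical

/-- Symplectic weight of a vector in `F^{2n}`, written as `Fin n → F × F`. -/
noncomputable def sympWt {F : Type} [Zero F] [DecidableEq F] {n : ℕ} (u : Fin n → F × F) : ℕ :=
  hammingNorm u

/-- The symplectic ball `B_q^S(2n, r)` of radius `r`. -/
noncomputable def sympBall (F : Type) [Fintype F] [Zero F] [DecidableEq F] (n r : ℕ) :
    Finset (Fin n → F × F) :=
  Finset.univ.filter fun x => sympWt x ≤ r

/-!
If `u_1|_T, …, u_ℓ|_T` are dependent, some relation `∑ g_j u_j|_T = 0` has `g_k ≠ 0`, so `u_k|_T`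
is determined by the other `u_j`: the tuple is recovered from `(u_j)_{j ≠ k}` and `u_k` zeroed
on `T`, a ball vector supported on `Tᶜ`. A union bound over the at most `q^ℓ ℓ` pairs `(g, k)`
bounds the dependent tuples by `q^ℓ ℓ · #{x ∈ B : supp x ⊆ Tᶜ} · #B^(ℓ-1)`.

Because `|Tᶜ| ≤ (1 - 2δ/3) n` and the radius `r = ⌊δn⌋` stays below the typical symplectic weight
`(1 - q⁻²) n`, every term `C(|Tᶜ|, s) (q²-1)^s` of the count of vectors supported on `Tᶜ` is at
most `θ^r C(n, r) (q²-1)^r ≤ θ^r #B` for a fixed `θ < 1`. The resulting factor `θ^⌊δn⌋`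
overwhelms `q^ℓ ℓ (r + 1) ≤ q^(4√n)`.
-/

open Filter

theorem Nat.choose_mul_pow_le_choose_mul_pow {m n : ℕ} (h : m ≤ n) (s : ℕ) :
    m.choose s * n ^ s ≤ n.choose s * m ^ s := by
  induction s with
  | zero => simp
  | succ s ih =>
    have hsub : (m - s) * n ≤ (n - s) * m := by
      rw [Nat.sub_mul, Nat.sub_mul, mul_comm m n]
      exact Nat.sub_le_sub_left (Nat.mul_le_mul_left s h) _
    refine Nat.le_of_mul_le_mul_right ?_ s.succ_pos
    calc m.choose (s + 1) * n ^ (s + 1) * (s + 1)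
        = m.choose s * n ^ s * ((m - s) * n) := by rw [mul_right_comm, m.choose_succ_right_eq]; ring
      _ ≤ n.choose s * m ^ s * ((n - s) * m) := Nat.mul_le_mul ih hsub
      _ = n.choose (s + 1) * m ^ (s + 1) * (s + 1) := by
        rw [mul_right_comm _ _ (s + 1), n.choose_succ_right_eq]; ring

theorem Nat.choose_mul_sub_pow_le {n r s : ℕ} (hs : s ≤ r) :
    n.choose s * (n - r) ^ (r - s) ≤ n.choose r * r ^ (r - s) := by
  induction r, hs using Nat.le_induction with
  | base => simp
  | succ r hsr ih =>
    rw [Nat.sub_add_comm hsr, pow_succ, pow_succ]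
    calc n.choose s * ((n - (r + 1)) ^ (r - s) * (n - (r + 1)))
        ≤ n.choose s * (n - r) ^ (r - s) * (n - r) := by
          rw [← mul_assoc]; gcongr <;> omega
      _ ≤ n.choose r * r ^ (r - s) * (n - r) := Nat.mul_le_mul_right _ ih
      _ = n.choose (r + 1) * (r + 1) * r ^ (r - s) := by rw [n.choose_succ_right_eq]; ring
      _ ≤ n.choose (r + 1) * ((r + 1) ^ (r - s) * (r + 1)) := by
          rw [mul_right_comm, mul_assoc]; gcongr; omega

theorem choose_le_pow_mul_choose {m n : ℕ} {θ : ℝ} (hmn : m ≤ n) (hn : 0 < n)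
    (hm : (m : ℝ) ≤ θ * n) (s : ℕ) : (m.choose s : ℝ) ≤ θ ^ s * n.choose s := by
  have hns : (0 : ℝ) < (n : ℝ) ^ s := by positivity
  refine le_of_mul_le_mul_right ?_ hns
  calc (m.choose s : ℝ) * n ^ s ≤ n.choose s * m ^ s := by
        exact_mod_cast Nat.choose_mul_pow_le_choose_mul_pow hmn s
    _ ≤ n.choose s * (θ * n) ^ s := by gcongr
    _ = θ ^ s * n.choose s * n ^ s := by ring

theorem choose_mul_pow_le_pow_mul_choose_mul_pow {n r s : ℕ} {P θ : ℝ} (hs : s ≤ r) (hrn : r < n)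
    (hP : 0 < P) (hr : (r : ℝ) ≤ θ * ((n - r) * P)) :
    n.choose s * P ^ s ≤ θ ^ (r - s) * (n.choose r * P ^ r) := by
  have hnr : (0 : ℝ) < n - r := sub_pos.2 (by exact_mod_cast hrn)
  have hD : (0 : ℝ) < ((n - r) * P) ^ (r - s) := by positivity
  have hchoose : (n.choose s : ℝ) * (n - r) ^ (r - s) ≤ n.choose r * r ^ (r - s) := by
    have := Nat.choose_mul_sub_pow_le (n := n) hs
    rw [← Nat.cast_le (α := ℝ)] at this
    push_cast [hrn.le] at this
    exact this
  refine le_of_mul_le_mul_right ?_ hD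
  calc n.choose s * P ^ s * ((n - r) * P) ^ (r - s)
      = n.choose s * (n - r) ^ (r - s) * P ^ r := by
        rw [mul_pow, ← pow_sub_mul_pow P hs]; ring
    _ ≤ n.choose r * r ^ (r - s) * P ^ r := by gcongr
    _ ≤ n.choose r * (θ * ((n - r) * P)) ^ (r - s) * P ^ r := by gcongr
    _ = θ ^ (r - s) * (n.choose r * P ^ r) * ((n - r) * P) ^ (r - s) := by rw [mul_pow θ]; ring

theorem sum_choose_mul_pow_le {m n r : ℕ} {P θ : ℝ} (hθ : 0 ≤ θ) (hmn : m ≤ n) (hrn : r < n)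
    (hP : 0 < P) (hm : (m : ℝ) ≤ θ * n) (hr : (r : ℝ) ≤ θ * ((n - r) * P)) :
    ∑ s ∈ range (r + 1), m.choose s * P ^ s ≤ (r + 1) * θ ^ r * (n.choose r * P ^ r) := by
  have hterm : ∀ s ∈ range (r + 1), m.choose s * P ^ s ≤ θ ^ r * (n.choose r * P ^ r) := by
    intro s hs
    have hsr : s ≤ r := mem_range_succ_iff.1 hs
    calc m.choose s * P ^ s ≤ θ ^ s * n.choose s * P ^ s := by
          gcongr; exact choose_le_pow_mul_choose hmn (by omega) hm s
      _ ≤ θ ^ s * (θ ^ (r - s) * (n.choose r * P ^ r)) := by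
          rw [mul_assoc]
          exact mul_le_mul_of_nonneg_left
            (choose_mul_pow_le_pow_mul_choose_mul_pow hsr hrn hP hr) (by positivity)
      _ = θ ^ r * (n.choose r * P ^ r) := by rw [← mul_assoc, ← pow_add, Nat.add_sub_cancel' hsr]
  calc _ ≤ ∑ _s ∈ range (r + 1), θ ^ r * (n.choose r * P ^ r) := sum_le_sum hterm
    _ = _ := by rw [sum_const, card_range, nsmul_eq_mul]; push_cast; ring

section Hamming

variable {ι V : Type*} [Fintype ι] [DecidableEq ι] [Zero V] [DecidableEq V]

theorem hammingNorm_piecewise_zero_le (T : Finset ι) (x : ι → V) :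
    hammingNorm (T.piecewise 0 x) ≤ hammingNorm x := by
  refine card_le_card fun i => ?_
  by_cases hi : i ∈ T <;> simp [hi]

variable [Fintype V]

theorem card_filter_support_eq (S : Finset ι) :
    #{x : ι → V | (univ.filter fun i => x i ≠ 0) = S} = (Fintype.card V - 1) ^ #S := by
  have hsupp : ({x : ι → V | (univ.filter fun i => x i ≠ 0) = S} : Finset (ι → V)) =
      Fintype.piFinset fun i => if i ∈ S then univ.erase 0 else {0} := by
    ext x
    simp only [mem_filter, mem_univ, true_and, Fintype.mem_piFinset, Finset.ext_iff]
    refine forall_congr' fun i => ?_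
    split_ifs with hi <;> simp [hi]
  rw [hsupp, Fintype.card_piFinset]
  simp [apply_ite card]

theorem card_filter_support_mem_powersetCard (U : Finset ι) (s : ℕ) :
    #{x : ι → V | (univ.filter fun i => x i ≠ 0) ∈ U.powersetCard s} =
      (#U).choose s * (Fintype.card V - 1) ^ s := by
  rw [card_eq_sum_card_fiberwise (f := fun x : ι → V => univ.filter fun i => x i ≠ 0)
    (t := U.powersetCard s) fun x hx => by simpa using hx,
    ← card_powersetCard s U, ← smul_eq_mul, ← sum_const]
  refine sum_congr rfl fun S hS => ?_
  obtain ⟨-, rfl⟩ := mem_powersetCard.1 hS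
  rw [filter_filter, ← card_filter_support_eq]
  congr 1
  ext x
  simp only [mem_filter, mem_univ, true_and, and_iff_right_iff_imp]
  rintro rfl
  exact hS

theorem choose_mul_pow_le_card_filter_hammingNorm_le (r : ℕ) :
    (Fintype.card ι).choose r * (Fintype.card V - 1) ^ r ≤ #{x : ι → V | hammingNorm x ≤ r} := by
  rw [← card_univ, ← card_filter_support_mem_powersetCard]
  refine card_le_card fun x hx => ?_
  simp only [mem_filter, mem_univ, true_and, mem_powersetCard] at hx ⊢
  exact hx.2.le

theorem card_le_sum_choose_mul_pow_of_vanishing {T : Finset ι} {r : ℕ} {C : Finset (ι → V)}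
    (hC : ∀ x ∈ C, (∀ i ∈ T, x i = 0) ∧ hammingNorm x ≤ r) :
    #C ≤ ∑ s ∈ range (r + 1), (#Tᶜ).choose s * (Fintype.card V - 1) ^ s := by
  rw [card_eq_sum_card_fiberwise (f := hammingNorm) (t := range (r + 1))
    fun x hx => mem_range_succ_iff.2 (hC x hx).2]
  refine sum_le_sum fun s _ => ?_
  rw [← card_filter_support_mem_powersetCard]
  refine card_le_card fun x hx => ?_
  obtain ⟨hxC, rfl⟩ := mem_filter.1 hx
  simp only [mem_filter, mem_univ, true_and, mem_powersetCard]
  refine ⟨fun i hi => mem_compl.2 fun hiT => ?_, rfl⟩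
  exact (mem_filter.1 hi).2 ((hC x hxC).1 i hiT)

theorem card_le_mul_card_filter_hammingNorm_le [Nontrivial V] {T : Finset ι} {r : ℕ}
    {C : Finset (ι → V)} (hC : ∀ x ∈ C, (∀ i ∈ T, x i = 0) ∧ hammingNorm x ≤ r) {θ : ℝ}
    (hθ : 0 ≤ θ) (hrn : r < Fintype.card ι) (hT : (#Tᶜ : ℝ) ≤ θ * Fintype.card ι)
    (hr : (r : ℝ) ≤ θ * ((Fintype.card ι - r) * (Fintype.card V - 1 : ℕ))) :
    (#C : ℝ) ≤ (r + 1) * θ ^ r * #{x : ι → V | hammingNorm x ≤ r} := by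
  have hP : (0 : ℝ) < (Fintype.card V - 1 : ℕ) := by
    exact_mod_cast Nat.sub_pos_of_lt Fintype.one_lt_card
  calc _ ≤ ∑ s ∈ range (r + 1), ((#Tᶜ).choose s * ((Fintype.card V - 1 : ℕ) : ℝ) ^ s) := by
        exact_mod_cast card_le_sum_choose_mul_pow_of_vanishing hC
    _ ≤ (r + 1) * θ ^ r * ((Fintype.card ι).choose r * ((Fintype.card V - 1 : ℕ) : ℝ) ^ r) :=
        sum_choose_mul_pow_le hθ (card_le_univ _) hrn hP hT hr
    _ ≤ _ := by
        gcongr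
        exact_mod_cast choose_mul_pow_le_card_filter_hammingNorm_le r

end Hamming

section LinearDependence

variable {F M ι κ : Type*} [Field F] [AddCommGroup M] [Module F M] [DecidableEq ι] [Fintype κ]
  [DecidableEq κ] {B C : Finset (ι → M)} {T : Finset ι}

theorem card_filter_sum_smul_eq_zero_le (hBC : ∀ x ∈ B, T.piecewise (0 : ι → M) x ∈ C)
    {g : κ → F} {k : κ} (hk : g k ≠ 0) :
    #((Fintype.piFinset fun _ : κ => B).filter fun u => ∀ i ∈ T, ∑ j, g j • u j i = 0) ≤
      #C * #B ^ (Fintype.card κ - 1) := by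
  calc _ ≤ #(Fintype.piFinset (Function.update (fun _ => B) k C)) := by
        refine card_le_card_of_injOn (fun u => Function.update u k (T.piecewise 0 (u k))) ?_ ?_
        · intro u hu
          simp only [coe_filter, Fintype.mem_piFinset, Set.mem_ofPred_eq] at hu
          simp only [mem_coe, Fintype.mem_piFinset]
          intro j
          rcases eq_or_ne j k with rfl | hj
          · simpa using hBC _ (hu.1 j)
          · simpa [Function.update_of_ne hj] using hu.1 j
        · intro u hu u' hu' huu'
          simp only [coe_filter, Fintype.mem_piFinset, Set.mem_ofPred_eq] at hu hu'
          have hne : ∀ j ≠ k, u j = u' j := fun j hj => by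
            simpa [Function.update_of_ne hj] using congr_fun huu' j
          funext j i
          rcases eq_or_ne j k with rfl | hj
          · by_cases hi : i ∈ T
            · have hsum : ∑ l, g l • (u l i - u' l i) = 0 := by
                simp [smul_sub, sum_sub_distrib, hu.2 i hi, hu'.2 i hi]
              rw [sum_eq_single j (fun l _ hl => by rw [hne l hl, sub_self, smul_zero])
                (by simp)] at hsum
              exact sub_eq_zero.1 ((smul_eq_zero.1 hsum).resolve_left hk)
            · simpa [T.piecewise_eq_of_notMem _ _ hi] using congr_fun (congr_fun huu' j) i
          · rw [hne j hj]
    _ = #C * #B ^ (Fintype.card κ - 1) := by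
        rw [Fintype.card_piFinset, ← Function.comp_def card, Function.comp_update,
          prod_update_of_mem (mem_univ k)]
        simp [card_sdiff]

theorem card_filter_not_linearIndependent_le [Fintype F]
    (hBC : ∀ x ∈ B, T.piecewise (0 : ι → M) x ∈ C) :
    #((Fintype.piFinset fun _ : κ => B).filter fun u =>
        ¬LinearIndependent F fun j (i : T) => u j i) ≤
      Fintype.card F ^ Fintype.card κ * Fintype.card κ * (#C * #B ^ (Fintype.card κ - 1)) := by
  have hcover : ((Fintype.piFinset fun _ : κ => B).filter fun u =>
        ¬LinearIndependent F fun j (i : T) => u j i) ⊆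
      (univ.filter fun p : (κ → F) × κ => p.1 p.2 ≠ 0).biUnion fun p =>
        (Fintype.piFinset fun _ : κ => B).filter fun u => ∀ i ∈ T, ∑ j, p.1 j • u j i = 0 := by
    intro u hu
    obtain ⟨hu, hdep⟩ := mem_filter.1 hu
    obtain ⟨g, hg, k, hk⟩ := Fintype.not_linearIndependent_iff.1 hdep
    exact mem_biUnion.2 ⟨(g, k), by simpa using hk,
      mem_filter.2 ⟨hu, fun i hi => by simpa using congr_fun hg ⟨i, hi⟩⟩⟩
  calc _ ≤ _ := card_le_card hcover
    _ ≤ _ := card_biUnion_le_card_mul _ _ _ fun p hp =>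
        card_filter_sum_smul_eq_zero_le hBC (mem_filter.1 hp).2
    _ ≤ _ := by
        gcongr
        exact (card_filter_le _ _).trans (by simp)

end LinearDependence

theorem card_filter_not_linearIndependent_hammingBall_le {F V ι : Type*} [Field F] [Fintype F]
    [AddCommGroup V] [Module F V] [Fintype V] [DecidableEq V] [Nontrivial V] [Fintype ι]
    [DecidableEq ι] {ℓ r : ℕ} (hℓ : 0 < ℓ) {T : Finset ι} {θ : ℝ} (hθ : 0 ≤ θ)
    (hrn : r < Fintype.card ι) (hT : (#Tᶜ : ℝ) ≤ θ * Fintype.card ι)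
    (hr : (r : ℝ) ≤ θ * ((Fintype.card ι - r) * (Fintype.card V - 1 : ℕ))) :
    (#((Fintype.piFinset fun _ : Fin ℓ => ({x : ι → V | hammingNorm x ≤ r} : Finset _)).filter
        fun u => ¬LinearIndependent F fun j (i : T) => u j i) : ℝ) ≤
      Fintype.card F ^ ℓ * ℓ * (r + 1) * θ ^ r * #{x : ι → V | hammingNorm x ≤ r} ^ ℓ := by
  set B : Finset (ι → V) := {x | hammingNorm x ≤ r}
  set C := B.image fun x => T.piecewise (0 : ι → V) x
  have hC : ∀ x ∈ C, (∀ i ∈ T, x i = 0) ∧ hammingNorm x ≤ r := by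
    simp only [C, mem_image]
    rintro _ ⟨x, hx, rfl⟩
    exact ⟨fun i hi => T.piecewise_eq_of_mem _ _ hi,
      (hammingNorm_piecewise_zero_le T x).trans (mem_filter.1 hx).2⟩
  have hunion := card_filter_not_linearIndependent_le (F := F) (κ := Fin ℓ) (C := C)
    fun x hx => mem_image_of_mem _ hx
  rw [Fintype.card_fin] at hunion
  calc _ ≤ (Fintype.card F ^ ℓ * ℓ * (#C * #B ^ (ℓ - 1)) : ℝ) := by exact_mod_cast hunion
    _ ≤ Fintype.card F ^ ℓ * ℓ * ((r + 1) * θ ^ r * #B * #B ^ (ℓ - 1)) := by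
        gcongr; exact card_le_mul_card_filter_hammingNorm_le hC hθ hrn hT hr
    _ = _ := by rw [mul_assoc _ (#B : ℝ), mul_pow_sub_one hℓ.ne']; ring

theorem Nat.sqrt_mul_succ_le_eight_pow (n : ℕ) : Nat.sqrt n * (n + 1) ≤ 8 ^ Nat.sqrt n := by
  have hℓ : Nat.sqrt n + 1 ≤ 2 ^ Nat.sqrt n := Nat.lt_two_pow_self
  calc Nat.sqrt n * (n + 1) ≤ 2 ^ Nat.sqrt n * (Nat.sqrt n + 1) ^ 2 :=
        Nat.mul_le_mul (by omega) (Nat.lt_succ_sqrt' n)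
    _ ≤ 2 ^ Nat.sqrt n * (2 ^ Nat.sqrt n) ^ 2 := by gcongr
    _ = 8 ^ Nat.sqrt n := by rw [← pow_mul, ← pow_add, show 8 = 2 ^ 3 by rfl, ← pow_mul]; ring_nf

theorem eventually_mul_sqrt_add_le (b c : ℝ) {a : ℝ} (ha : 0 < a) :
    ∀ᶠ n : ℕ in atTop, b * √n + c ≤ a * n := by
  set t := (|b| + |c|) / a + 1
  have ht1 : 1 ≤ t := le_add_of_nonneg_left (by positivity)
  refine eventually_atTop.2 ⟨⌈t ^ 2⌉₊, fun n hn => ?_⟩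
  have ht : t ≤ √n := Real.le_sqrt_of_sq_le ((Nat.le_ceil _).trans (by exact_mod_cast hn))
  have hat : a * t = |b| + |c| + a := by simp only [t]; field_simp
  calc b * √n + c ≤ (|b| + |c| + a) * √n := by
        nlinarith [le_abs_self b, le_abs_self c, abs_nonneg b, abs_nonneg c]
    _ = a * t * √n := by rw [hat]
    _ ≤ a * √n * √n := by gcongr
    _ = a * n := by rw [mul_assoc, Real.mul_self_sqrt n.cast_nonneg]

theorem exists_pos_eventually_le_rpow_neg {q θ δ : ℝ} (hq : 2 ≤ q) (hθ0 : 0 < θ) (hθ1 : θ < 1)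
    (hδ0 : 0 < δ) (hδ1 : δ ≤ 1) :
    ∃ a : ℝ, 0 < a ∧ ∀ᶠ n : ℕ in atTop,
      q ^ Nat.sqrt n * Nat.sqrt n * (⌊δ * n⌋₊ + 1) * θ ^ ⌊δ * n⌋₊ ≤ q ^ (-(a * n)) := by
  -- With `θ = q ^ μ`, the left side is at most `q ^ (4ℓ + μ r)`, and `μ r ≤ μ δ n - μ`
  -- outweighs `4ℓ ≤ 4√n`.
  set μ := Real.logb q θ
  have hμ : μ < 0 := Real.logb_neg (by linarith) hθ0 hθ1
  refine ⟨-μ * δ / 2, by nlinarith, ?_⟩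
  filter_upwards [eventually_mul_sqrt_add_le 4 (-μ) (show 0 < -μ * δ / 2 by nlinarith)] with n hn
  set ℓ := Nat.sqrt n
  set r := ⌊δ * n⌋₊
  have hrn : r ≤ n := Nat.floor_le_of_le (by nlinarith [(n.cast_nonneg : (0 : ℝ) ≤ n)])
  have hsmall : (ℓ : ℝ) * (r + 1) ≤ q ^ (3 * ℓ) := by
    calc (ℓ : ℝ) * (r + 1) ≤ ℓ * (n + 1) := by gcongr
      _ ≤ 8 ^ ℓ := by exact_mod_cast Nat.sqrt_mul_succ_le_eight_pow n
      _ ≤ (q ^ 3) ^ ℓ := by gcongr; linarith [pow_le_pow_left₀ zero_le_two hq 3]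
      _ = q ^ (3 * ℓ) := by rw [← pow_mul, mul_comm]
  have hexp : (4 * ℓ : ℝ) + μ * r ≤ -(-μ * δ / 2 * n) := by
    have hℓ : (ℓ : ℝ) ≤ √n := Real.nat_sqrt_le_real_sqrt
    have hr : δ * n - 1 < r := Nat.sub_one_lt_floor _
    nlinarith
  calc q ^ ℓ * ℓ * (r + 1) * θ ^ r ≤ q ^ ℓ * q ^ (3 * ℓ) * θ ^ r := by
        rw [mul_assoc (q ^ ℓ)]; gcongr
    _ = q ^ ((4 * ℓ : ℕ) : ℝ) * (q ^ μ) ^ r := by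
        rw [Real.rpow_logb (by linarith) (by linarith) hθ0, Real.rpow_natCast, ← pow_add]; ring_nf
    _ = q ^ ((4 * ℓ : ℝ) + μ * r) := by
        rw [Real.rpow_add (by linarith), ← Real.rpow_mul_natCast (by linarith)]; push_cast; ring_nf
    _ ≤ q ^ (-(-μ * δ / 2 * n)) := Real.rpow_le_rpow_of_exponent_le (by linarith) hexp

theorem card_filter_sympBall_not_linearIndependent_le {F : Type} [Field F] [Fintype F]
    [DecidableEq F] {n ℓ : ℕ} {δ θ : ℝ} (T : Finset (Fin n)) (hn : 0 < n) (hℓ : 0 < ℓ)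
    (hδ0 : 0 ≤ δ) (hδ1 : δ < 1) (hθT : 1 - 2 * δ / 3 ≤ θ)
    (hθδ : δ ≤ θ * ((1 - δ) * (Fintype.card F ^ 2 - 1))) (hT : 2 * δ / 3 * n ≤ #T) :
    (#{u : Fin ℓ → Fin n → F × F | (∀ j, u j ∈ sympBall F n ⌊δ * n⌋₊) ∧
        ¬LinearIndependent F fun j (i : {i // i ∈ T}) => u j i.1} : ℝ) ≤
      Fintype.card F ^ ℓ * ℓ * (⌊δ * n⌋₊ + 1) * θ ^ ⌊δ * n⌋₊ *
        #(sympBall F n ⌊δ * n⌋₊) ^ ℓ := by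
  set r := ⌊δ * n⌋₊
  have hnR : (0 : ℝ) < n := by exact_mod_cast hn
  have hθ : 0 ≤ θ := by linarith
  have hrδ : (r : ℝ) ≤ δ * n := Nat.floor_le (by positivity)
  have hrn : r < Fintype.card (Fin n) := by
    rw [Fintype.card_fin]; exact Nat.floor_lt (by positivity) |>.2 (by nlinarith)
  have hcardT : (#Tᶜ : ℝ) ≤ θ * Fintype.card (Fin n) := by
    rw [card_compl, Nat.cast_sub (card_le_univ T), Fintype.card_fin]
    nlinarith
  have hr : (r : ℝ) ≤ θ * ((Fintype.card (Fin n) - r) * (Fintype.card (F × F) - 1 : ℕ)) := by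
    have hq : (1 : ℝ) ≤ Fintype.card F ^ 2 := by
      exact_mod_cast Nat.one_le_pow _ _ Fintype.card_pos
    rw [Fintype.card_fin, Fintype.card_prod,
      Nat.cast_sub (Nat.one_le_iff_ne_zero.2 (by positivity))]
    push_cast
    have h1 : (1 - δ) * n ≤ n - r := by linarith
    nlinarith [mul_le_mul_of_nonneg_right hθδ hnR.le,
      mul_le_mul_of_nonneg_left h1 (mul_nonneg hθ (sub_nonneg.2 hq))]
  have hpi : ({u : Fin ℓ → Fin n → F × F | (∀ j, u j ∈ sympBall F n r) ∧
      ¬LinearIndependent F fun j (i : {i // i ∈ T}) => u j i.1} : Finset _) =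
      (Fintype.piFinset fun _ => sympBall F n r).filter fun u =>
        ¬LinearIndependent F fun j (i : {i // i ∈ T}) => u j i.1 := by
    ext u; simp [Fintype.mem_piFinset]
  rw [hpi]
  exact card_filter_not_linearIndependent_hammingBall_le hℓ hθ hrn hcardT hr

/-- For a prime power `q` (realized as the cardinality of a finite field `F`)
and a constant `δ ∈ (0, 1 - 1/q²)`, there is a constant `a_δ > 0` such that for all
sufficiently large `n`, with `d - 1 = ⌊δn⌋` and `ℓ = ⌊√n⌋`: for every `T ⊆ {1,…,n}` with
`|T| ≥ (2δ/3)n`, if `u_1, …, u_ℓ` are independent uniform vectors of `B_q^S(2n, d-1)`, then the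
probability that the restrictions `u_1|_T, …, u_ℓ|_T` are linearly dependent is at most
`q^{-a_δ n}` (expressed by counting `ℓ`-tuples of ball elements). -/
theorem symp_restricted_linear_dependence_bound
    (q : ℕ) (F : Type) [Field F] [Fintype F] [DecidableEq F] (hF : Fintype.card F = q)
    (δ : ℝ) (hδ0 : 0 < δ) (hδ : δ < 1 - 1 / (q : ℝ) ^ 2) :
    ∃ a : ℝ, 0 < a ∧ ∃ N : ℕ, ∀ n : ℕ, N ≤ n →
      ∀ T : Finset (Fin n), 2 * δ / 3 * (n : ℝ) ≤ (T.card : ℝ) →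
        (((Finset.univ : Finset (Fin (Nat.sqrt n) → Fin n → F × F)).filter fun u =>
            (∀ j, u j ∈ sympBall F n ⌊δ * (n : ℝ)⌋₊) ∧
              ¬ LinearIndependent F
                  (fun j : Fin (Nat.sqrt n) => fun i : {i // i ∈ T} => u j i.1)).card : ℝ) ≤
          (q : ℝ) ^ (-(a * (n : ℝ))) *
            ((sympBall F n ⌊δ * (n : ℝ)⌋₊).card : ℝ) ^ (Nat.sqrt n) := by
  subst hF
  have hq : (2 : ℝ) ≤ Fintype.card F := by exact_mod_cast Fintype.one_lt_card (α := F)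
  have hq2 : (1 : ℝ) < Fintype.card F ^ 2 := by nlinarith
  have hδ1 : δ < 1 := hδ.trans (sub_lt_self _ (by positivity))
  have hden : 0 < (1 - δ) * (Fintype.card F ^ 2 - 1 : ℝ) := mul_pos (by linarith) (by linarith)
  set θ := max (1 - 2 * δ / 3) (δ / ((1 - δ) * (Fintype.card F ^ 2 - 1)))
  have hθ1 : θ < 1 := by
    refine max_lt (by linarith) ((div_lt_one hden).2 ?_)
    rw [lt_sub_iff_add_lt, ← lt_sub_iff_add_lt', div_lt_iff₀ (by linarith)] at hδ
    nlinarith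
  have hθδ : δ ≤ θ * ((1 - δ) * (Fintype.card F ^ 2 - 1)) := (div_le_iff₀ hden).1 (le_max_right _ _)
  obtain ⟨a, ha, hev⟩ := exists_pos_eventually_le_rpow_neg hq
    ((by linarith : (0 : ℝ) < 1 - 2 * δ / 3).trans_le (le_max_left _ _)) hθ1 hδ0 hδ1.le
  obtain ⟨N, hN⟩ := eventually_atTop.1 (hev.and (eventually_gt_atTop 0))
  refine ⟨a, ha, N, fun n hn T hT => ?_⟩
  obtain ⟨hscalar, hn0⟩ := hN n hn
  calc _ ≤ _ := card_filter_sympBall_not_linearIndependent_le T hn0 (Nat.sqrt_pos.2 hn0) hδ0.le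
        hδ1 (le_max_left _ _) hθδ hT
    _ ≤ _ := by gcongr
end
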